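/- arXiv:math-ph/0212030 — 6 statements merged into one kernel-verified Lean document; each statement's English description precedes it below -/
import Mathlib

section
/- Let e = (1 + γ₀)/2 in the real spacetime algebra Cℓ(1,3). Then for every element x of Cℓ(1,3) there exists an element ψ of the even subalgebra Cℓ⁰(1,3) such that x * e = ψ * e. In other words, the left ideal Cℓ(1,3)·e coincides with the set Cℓ⁰(1,3)·e of products of even elements with e. -/
open CliffordAlgebra

noncomputable def Q13 : QuadraticForm ℝ (Fin 4 → ℝ) :=
  QuadraticMap.weightedSumSquares ℝ ![(1 : ℝ), -1, -1, -1]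

/-- The spacetime algebra `Cℓ(1,3)`. -/
noncomputable abbrev STA : Type := CliffordAlgebra Q13

/-- The generators `γμ`. -/
noncomputable def γ (μ : Fin 4) : STA := ι Q13 (Pi.single μ 1)

/-! Writing `x = x₀ + x₁` with `x₀` even and `x₁` odd, any vector `v` with `v e = e` lets the
odd part be traded for an even one: `x e = (x₀ + x₁ v) e`. For `e = (1 + γ₀)/2` the vector `γ₀`
does this because `γ₀² = 1`. -/

namespace CliffordAlgebra

variable {R M : Type*} [CommRing R] [AddCommGroup M] [Module R M] {Q : QuadraticForm R M}

theorem exists_mem_even_mul_eq_of_ι_mul_eq {e : CliffordAlgebra Q} {v : M}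
    (hv : ι Q v * e = e) (x : CliffordAlgebra Q) : ∃ ψ ∈ even Q, x * e = ψ * e := by
  obtain ⟨x₀, hx₀, x₁, hx₁, rfl⟩ :=
    Submodule.mem_sup.mp ((evenOdd_isCompl Q).sup_eq_top ▸ Submodule.mem_top (x := x))
  refine ⟨x₀ + x₁ * ι Q v, ?_, by rw [add_mul, add_mul, mul_assoc, hv]⟩
  have hodd : x₁ * ι Q v ∈ evenOdd Q (1 + 1) :=
    evenOdd_mul_le Q 1 1 (Submodule.mul_mem_mul hx₁ (ι_mem_evenOdd_one Q v))
  rw [← Subalgebra.mem_toSubmodule, even_toSubmodule]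
  exact add_mem hx₀ hodd

theorem ι_mul_smul_one_add_ι {v : M} (hv : Q v = 1) (c : R) :
    ι Q v * (c • (1 + ι Q v)) = c • (1 + ι Q v) := by
  rw [mul_smul_comm, mul_add, mul_one, ι_sq_scalar, hv, map_one, add_comm]

end CliffordAlgebra

theorem Q13_single_zero : Q13 (Pi.single 0 1) = 1 := by
  simp [Q13, QuadraticMap.weightedSumSquares_apply, Pi.single_apply]

theorem even_ideal_eq :
    ∀ x : STA, ∃ ψ ∈ CliffordAlgebra.even Q13,
      x * (((1 : ℝ)/2) • (1 + γ 0)) = ψ * (((1 : ℝ)/2) • (1 + γ 0)) :=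
  exists_mem_even_mul_eq_of_ι_mul_eq (ι_mul_smul_one_add_ι Q13_single_zero _)
end

section
/- Let e = (1 + γ₀)/2 in the real spacetime algebra Cℓ(1,3). The ℝ-linear map from the even subalgebra Cℓ⁰(1,3) to Cℓ(1,3) given by ψ ↦ ψ * e is injective; hence every element of the left ideal Cℓ(1,3)·e has a unique representation ψ·e with ψ even. -/
open CliffordAlgebra

/-- The pseudoscalar `γ₅ = γ₀γ₁γ₂γ₃`. -/
noncomputable def γ₅ : STA := γ 0 * γ 1 * γ 2 * γ 3

/-!
Multiplying an even element `ψ` on the right by `1 + γ₀` gives `ψ + ψγ₀`, whose even part is `ψ`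
and whose odd part is `ψγ₀`; since the even and odd parts of the Clifford algebra intersect
trivially, `ψ` can be read off from the product.
-/

namespace CliffordAlgebra

variable {R M : Type*} [CommRing R] [AddCommGroup M] [Module R M] {Q : QuadraticForm R M}

theorem eq_zero_of_mem_evenOdd_zero_of_mem_evenOdd_one {x : CliffordAlgebra Q}
    (h₀ : x ∈ evenOdd Q 0) (h₁ : x ∈ evenOdd Q 1) : x = 0 :=
  Submodule.disjoint_def.mp (evenOdd_isCompl Q).disjoint x h₀ h₁

theorem mul_ι_mem_evenOdd_one_of_mem_even {x : CliffordAlgebra Q} (hx : x ∈ even Q) (v : M) :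
    x * ι Q v ∈ evenOdd Q 1 := by
  simpa using SetLike.mul_mem_graded (A := evenOdd Q) hx (ι_mem_evenOdd_one Q v)

theorem even_mul_one_add_ι_injective (v : M) :
    Function.Injective fun ψ : even Q => (ψ : CliffordAlgebra Q) * (1 + ι Q v) := by
  intro ψ₁ ψ₂ h
  set x : CliffordAlgebra Q := ψ₁ - ψ₂
  have hx_even : x ∈ even Q := sub_mem ψ₁.2 ψ₂.2
  have hx_eq : x = -(x * ι Q v) := by
    rw [eq_neg_iff_add_eq_zero, ← mul_one_add, sub_mul, sub_eq_zero]
    exact h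
  have hx_odd : x ∈ evenOdd Q 1 := by
    rw [hx_eq]
    exact neg_mem (mul_ι_mem_evenOdd_one_of_mem_even hx_even v)
  exact Subtype.ext <| sub_eq_zero.mp <|
    eq_zero_of_mem_evenOdd_zero_of_mem_evenOdd_one hx_even hx_odd

end CliffordAlgebra

/-- The map `ψ ↦ ψ * e` with `e = (1 + γ₀)/2` is injective on the even subalgebra. -/
theorem even_mul_idempotent_injective :
    Function.Injective
      (fun ψ : CliffordAlgebra.even Q13 => (ψ : STA) * (((1 : ℝ)/2) • (1 + γ 0))) := by
  intro ψ₁ ψ₂ h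
  simp only [mul_smul_comm] at h
  exact even_mul_one_add_ι_injective _ (smul_right_injective STA (by norm_num) h)
end

section
/- For every element ψ of the even subalgebra Cℓ⁰(1,3) of the real spacetime algebra, the product ψ * reverse(ψ) lies in the two-dimensional real subspace spanned by 1 and the pseudoscalar γ₅; that is, there exist real numbers σ and ω with ψ * reverse(ψ) = σ·1 + ω·γ₅. -/
open CliffordAlgebra

/-!
The even subalgebra is spanned by `1`, the six bivectors `γμγν` (`μ < ν`) and `γ₅`, since these
together with the vectors and trivectors form a family closed under left multiplication by the
generators. Reversion fixes `1` and `γ₅` and negates each bivector, so `x + reverse x` lies in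
`span {1, γ₅}` for every even `x`. Finally `ψ * reverse ψ` is even and equal to its own reverse,
so it is half of such a sum.
-/

namespace QuadraticMap

variable {κ R : Type*} [CommRing R] [Fintype κ] [DecidableEq κ]

theorem weightedSumSquares_single (w : κ → R) (i : κ) (a : R) :
    weightedSumSquares R w (Pi.single i a) = w i * (a * a) := by
  rw [weightedSumSquares_apply, Finset.sum_eq_single i] <;> simp_all

theorem isOrtho_weightedSumSquares_single (w : κ → R) {i j : κ} (h : i ≠ j) (a b : R) :
    (weightedSumSquares R w).IsOrtho (Pi.single i a) (Pi.single j b) := by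
  rw [isOrtho_def, weightedSumSquares_apply, weightedSumSquares_single, weightedSumSquares_single,
    Finset.sum_eq_add_of_mem i j (Finset.mem_univ _) (Finset.mem_univ _) h]
  · simp [h, h.symm]
  · intro k _ hk
    simp [hk]

end QuadraticMap

namespace CliffordAlgebra

theorem ι_single_mul_self {κ R : Type*} [CommRing R] [Fintype κ] [DecidableEq κ]
    (w : κ → R) (i : κ) :
    ι (QuadraticMap.weightedSumSquares R w) (Pi.single i 1) * ι _ (Pi.single i 1) =
      algebraMap R _ (w i) := by
  rw [ι_sq_scalar, QuadraticMap.weightedSumSquares_single, mul_one, mul_one]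

variable {κ R M : Type*} [CommRing R] [AddCommGroup M] [Module R M] {Q : QuadraticForm R M}

theorem le_comap_mulLeft_ι_of_basis (b : Module.Basis κ R M) {S T : Submodule R (CliffordAlgebra Q)}
    (h : ∀ i, S ≤ T.comap (LinearMap.mulLeft R (ι Q (b i)))) (m : M) :
    S ≤ T.comap (LinearMap.mulLeft R (ι Q m)) := by
  intro x hx
  have : Submodule.span R (Set.range b) ≤ T.comap ((LinearMap.mulRight R x).comp (ι Q)) :=
    Submodule.span_le.2 (Set.range_subset_iff.2 fun i ↦ h i hx)
  exact (b.span_eq ▸ this) Submodule.mem_top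

theorem toSubmodule_even_le_of_basis (b : Module.Basis κ R M)
    {S T : Submodule R (CliffordAlgebra Q)} (h1 : 1 ∈ S)
    (hST : ∀ i, S ≤ T.comap (LinearMap.mulLeft R (ι Q (b i))))
    (hTS : ∀ i, T ≤ S.comap (LinearMap.mulLeft R (ι Q (b i)))) :
    Subalgebra.toSubmodule (even Q) ≤ S := by
  rw [even_toSubmodule]
  intro x hx
  induction x, hx using even_induction with
  | algebraMap r => simpa [Algebra.algebraMap_eq_smul_one] using S.smul_mem r h1
  | add x y _ _ hx hy => exact S.add_mem hx hy
  | ι_mul_ι_mul m₁ m₂ x _ hx =>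
    rw [mul_assoc]
    exact le_comap_mulLeft_ι_of_basis b hTS m₁ (le_comap_mulLeft_ι_of_basis b hST m₂ hx)

end CliffordAlgebra

namespace STA

@[simp]
theorem γ_mul_self (μ : Fin 4) : γ μ * γ μ = algebraMap ℝ STA (![1, -1, -1, -1] μ) :=
  ι_single_mul_self _ μ

@[simp]
theorem γ_mul_γ_mul_self (μ : Fin 4) (x : STA) :
    γ μ * (γ μ * x) = (![1, -1, -1, -1] μ : ℝ) • x := by
  rw [← mul_assoc, γ_mul_self, Algebra.smul_def]

@[simp]
theorem γ_mul_γ_of_lt {μ ν : Fin 4} (h : ν < μ) : γ μ * γ ν = -(γ ν * γ μ) :=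
  ι_mul_ι_comm_of_isOrtho (QuadraticMap.isOrtho_weightedSumSquares_single _ h.ne' 1 1)

@[simp]
theorem γ_mul_γ_mul_of_lt {μ ν : Fin 4} (h : ν < μ) (x : STA) :
    γ μ * (γ ν * x) = -(γ ν * (γ μ * x)) :=
  ι_mul_ι_mul_of_isOrtho x (QuadraticMap.isOrtho_weightedSumSquares_single _ h.ne' 1 1)

@[simp]
theorem reverse_γ (μ : Fin 4) : reverse (γ μ) = γ μ := reverse_ι _

noncomputable def evenSpan : Submodule ℝ STA :=
  Submodule.span ℝ {1, γ 0 * γ 1, γ 0 * γ 2, γ 0 * γ 3, γ 1 * γ 2, γ 1 * γ 3, γ 2 * γ 3, γ₅}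

noncomputable def oddSpan : Submodule ℝ STA :=
  Submodule.span ℝ {γ 0, γ 1, γ 2, γ 3,
    γ 0 * γ 1 * γ 2, γ 0 * γ 1 * γ 3, γ 0 * γ 2 * γ 3, γ 1 * γ 2 * γ 3}

theorem evenSpan_le_comap_mulLeft_γ (μ : Fin 4) :
    evenSpan ≤ oddSpan.comap (LinearMap.mulLeft ℝ (γ μ)) := by
  rw [evenSpan, Submodule.span_le]
  simp only [Set.insert_subset_iff, Set.singleton_subset_iff, SetLike.mem_coe,
    Submodule.mem_comap, LinearMap.mulLeft_apply]
  fin_cases μ <;> simp [oddSpan, γ₅, mul_assoc] <;>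
    and_intros <;> exact Submodule.subset_span (by simp)

theorem oddSpan_le_comap_mulLeft_γ (μ : Fin 4) :
    oddSpan ≤ evenSpan.comap (LinearMap.mulLeft ℝ (γ μ)) := by
  rw [oddSpan, Submodule.span_le]
  simp only [Set.insert_subset_iff, Set.singleton_subset_iff, SetLike.mem_coe,
    Submodule.mem_comap, LinearMap.mulLeft_apply]
  fin_cases μ <;> simp [evenSpan, γ₅, mul_assoc] <;>
    and_intros <;> exact Submodule.subset_span (by simp)

theorem toSubmodule_even_le_evenSpan : Subalgebra.toSubmodule (even Q13) ≤ evenSpan :=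
  toSubmodule_even_le_of_basis (Pi.basisFun ℝ (Fin 4)) (T := oddSpan)
    (Submodule.subset_span (by simp))
    (fun μ ↦ by rw [Pi.basisFun_apply]; exact evenSpan_le_comap_mulLeft_γ μ)
    (fun μ ↦ by rw [Pi.basisFun_apply]; exact oddSpan_le_comap_mulLeft_γ μ)

theorem reverse_add_self_mem_span {x : STA} (hx : x ∈ evenSpan) :
    reverse x + x ∈ Submodule.span ℝ {1, γ₅} := by
  suffices evenSpan ≤ (Submodule.span ℝ {1, γ₅}).comap (reverse + LinearMap.id) from this hx
  rw [evenSpan, Submodule.span_le]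
  simp only [Set.insert_subset_iff, Set.singleton_subset_iff, SetLike.mem_coe,
    Submodule.mem_comap, LinearMap.add_apply, LinearMap.id_apply]
  simp [γ₅, reverse.map_mul, mul_assoc]
  and_intros <;> exact add_mem (Submodule.subset_span (by simp)) (Submodule.subset_span (by simp))

end STA

open STA in
/-- For ψ even, `ψ * reverse ψ` lies in the span of `1` and `γ₅`. -/
theorem even_mul_reverse_mem_span :
    ∀ ψ ∈ CliffordAlgebra.even Q13, ∃ σ ω : ℝ,
      ψ * reverse (Q := Q13) ψ = σ • (1 : STA) + ω • γ₅ := by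
  intro ψ hψ
  have hψ' : reverse ψ ∈ even Q13 := by
    rw [← Subalgebra.mem_toSubmodule, even_toSubmodule] at hψ ⊢
    exact (reverse_mem_evenOdd_iff Q13).2 hψ
  have hself : reverse (ψ * reverse ψ) = ψ * reverse ψ := by
    rw [reverse.map_mul, reverse_reverse]
  have hspan := reverse_add_self_mem_span (toSubmodule_even_le_evenSpan ((even Q13).mul_mem hψ hψ'))
  rw [hself, ← two_smul ℝ, Submodule.smul_mem_iff _ two_ne_zero, Submodule.mem_span_pair] at hspan
  obtain ⟨σ, ω, h⟩ := hspan
  exact ⟨σ, ω, h.symm⟩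
end

section
/- (Porteous-type characterization of the spin group in Cℓ(1,3).) Let u be an element of the even subalgebra Cℓ⁰(1,3) with u * reverse(u) = 1. Then u is a unit with inverse reverse(u), and there exists an ℝ-linear map f : ℝ⁴ → ℝ⁴ preserving the Minkowski quadratic form (Q(f v) = Q(v) for all v ∈ ℝ⁴) such that u * ι(v) * reverse(u) = ι(f v) for all v ∈ ℝ⁴. Thus conjugation by u induces a Lorentz transformation on 1-vectors. -/
open CliffordAlgebra

/-!
Put `x = u ι(v) ũ`. As `u` is even, `x` is odd, i.e. `involute x = -x`, and `reverse x = x`.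
Bourbaki's `changeForm` is a linear isomorphism `Cℓ(Q) ≃ ⋀ V` that fixes vectors and commutes
with both involutions, which act on `⋀ⁱ V` by `(-1)ⁱ` and `(-1)^(i choose 2)`. When `dim V ≤ 4`
the only degree carrying the signs `(-1, +1)` is `i = 1`, so `x` is a vector `ι(f v)`, with `f`
linear because `ι` has a linear left inverse; then `ι(f v)² = u ι(v)² ũ = Q(v)`. Finally `ũ u = 1`
because a one-sided inverse in the finite-dimensional algebra `Cℓ(Q)` is two-sided.
-/

theorem eq_zero_of_eq_neg {K V : Type*} [Ring K] [Invertible (2 : K)] [AddCommGroup V]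
    [Module K V] {v : V} (h : v = -v) : v = 0 := by
  have h2 : (2 : K) • v = 0 := by rw [two_smul]; nth_rw 2 [h]; exact add_neg_cancel v
  rw [← one_smul K v, ← invOf_mul_self (2 : K), mul_smul, h2, smul_zero]

theorem DirectSum.coe_decompose_map_of_mapsTo {ι R A : Type*} [DecidableEq ι] [Semiring R]
    [AddCommMonoid A] [Module R A] (𝒜 : ι → Submodule R A) [DirectSum.Decomposition 𝒜]
    (f : A →ₗ[R] A) (hf : ∀ i, Set.MapsTo f (𝒜 i) (𝒜 i)) (x : A) (i : ι) :
    (decompose 𝒜 (f x) i : A) = f (decompose 𝒜 x i) := by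
  induction x using DirectSum.Decomposition.inductionOn 𝒜 with
  | zero => simp
  | add x y hx hy =>
    simp only [map_add, decompose_add, DirectSum.add_apply, Submodule.coe_add, hx, hy]
  | homogeneous z =>
    rename_i j
    by_cases hij : j = i
    · subst hij
      rw [decompose_of_mem_same 𝒜 z.2, decompose_of_mem_same 𝒜 (hf j z.2)]
    · rw [decompose_of_mem_ne 𝒜 z.2 hij, decompose_of_mem_ne 𝒜 (hf j z.2) hij, map_zero]

namespace CliffordAlgebra

section

variable {R M : Type*} [CommRing R] [AddCommGroup M] [Module R M] {Q Q' : QuadraticForm R M}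

theorem conj_ι_mul_self {u w : CliffordAlgebra Q} (huw : u * w = 1) (hwu : w * u = 1) (v : M) :
    u * ι Q v * w * (u * ι Q v * w) = algebraMap R _ (Q v) := by
  calc u * ι Q v * w * (u * ι Q v * w) = u * (ι Q v * (w * u) * ι Q v) * w := by
        simp only [mul_assoc]
    _ = algebraMap R _ (Q v) * (u * w) := by
        rw [hwu, mul_one, ι_sq_scalar, ← Algebra.commutes, mul_assoc]
    _ = algebraMap R _ (Q v) := by rw [huw, mul_one]

theorem contractLeft_mul_ι (d : Module.Dual R M) (x : CliffordAlgebra Q) (m : M) :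
    contractLeft d (x * ι Q m) = contractLeft d x * ι Q m + d m • involute x := by
  induction x using CliffordAlgebra.left_induction with
  | algebraMap r =>
    rw [← Algebra.smul_def, map_smul, contractLeft_ι, contractLeft_algebraMap, zero_mul,
      zero_add, AlgHom.commutes, Algebra.smul_def, Algebra.smul_def, ← map_mul, ← map_mul,
      mul_comm]
  | add x y hx hy =>
    rw [add_mul, map_add, map_add, hx, hy, map_add, add_mul, smul_add]
    abel
  | ι_mul x a hx =>
    rw [mul_assoc, contractLeft_ι_mul, contractLeft_ι_mul, hx, map_mul, involute_ι, mul_add,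
      mul_smul_comm, sub_mul, smul_mul_assoc, neg_mul, smul_neg, mul_assoc]
    abel

theorem contractRight_ι_mul (d : Module.Dual R M) (m : M) (x : CliffordAlgebra Q) :
    contractRight (ι Q m * x) d = ι Q m * contractRight x d + d m • involute x := by
  rw [contractRight_eq, reverse.map_mul, reverse_ι, contractLeft_mul_ι, map_add, map_smul,
    reverse.map_mul, reverse_ι, ← contractRight_eq, reverse_involute, reverse_reverse]

theorem contractLeft_involute (d : Module.Dual R M) (x : CliffordAlgebra Q) :
    contractLeft d (involute x) = -involute (contractLeft d x) := by
  induction x using CliffordAlgebra.left_induction with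
  | algebraMap r => simp
  | add x y hx hy => rw [map_add, map_add, hx, hy, map_add, map_add, neg_add]
  | ι_mul x a hx =>
    rw [map_mul, involute_ι, neg_mul, map_neg, contractLeft_ι_mul, contractLeft_ι_mul, hx,
      map_sub, map_smul, map_mul, involute_ι]
    simp only [mul_neg, neg_mul, sub_neg_eq_add]

theorem contractRight_contractLeft (d d' : Module.Dual R M) (x : CliffordAlgebra Q) :
    contractRight (contractLeft d x) d' = contractLeft d (contractRight x d') := by
  induction x using CliffordAlgebra.left_induction with
  | algebraMap r => simp
  | add x y hx hy => simp only [map_add, LinearMap.add_apply, hx, hy]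
  | ι_mul x a hx =>
    rw [contractLeft_ι_mul, map_sub, map_smul, LinearMap.sub_apply, LinearMap.smul_apply,
      contractRight_ι_mul, contractRight_ι_mul, map_add, contractLeft_ι_mul, hx, map_smul,
      contractLeft_involute, smul_neg]
    abel

variable {B : LinearMap.BilinForm R M}

theorem changeForm_involute (h : B.toQuadraticMap = Q' - Q) (x : CliffordAlgebra Q) :
    changeForm h (involute x) = involute (changeForm h x) := by
  induction x using CliffordAlgebra.left_induction with
  | algebraMap r => simp
  | add x y hx hy => rw [map_add, map_add, hx, hy, map_add, map_add]
  | ι_mul x a hx =>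
    rw [map_mul, involute_ι, neg_mul, map_neg, changeForm_ι_mul, changeForm_ι_mul, hx, map_sub,
      map_mul, involute_ι, contractLeft_involute, neg_mul]
    abel

theorem changeForm_mul_ι (h : B.toQuadraticMap = Q' - Q) (hB : B.IsSymm)
    (x : CliffordAlgebra Q) (m : M) :
    changeForm h (x * ι Q m) =
      changeForm h x * ι Q' m - contractRight (changeForm h x) (B m) := by
  induction x using CliffordAlgebra.left_induction with
  | algebraMap r =>
    rw [← Algebra.smul_def, map_smul, changeForm_ι, changeForm_algebraMap, ← Algebra.smul_def,
      contractRight_algebraMap, sub_zero]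
  | add x y hx hy =>
    rw [add_mul, map_add, hx, hy, map_add, add_mul, map_add, LinearMap.add_apply]
    abel
  | ι_mul x a hx =>
    rw [mul_assoc, changeForm_ι_mul, changeForm_ι_mul, hx, map_sub, contractLeft_mul_ι,
      sub_mul, mul_sub, map_sub, LinearMap.sub_apply, contractRight_ι_mul,
      ← contractRight_contractLeft, hB.eq a m, ← mul_assoc]
    abel

theorem changeForm_reverse (h : B.toQuadraticMap = Q' - Q) (hB : B.IsSymm)
    (x : CliffordAlgebra Q) :
    changeForm h (reverse x) = reverse (changeForm h x) := by
  induction x using CliffordAlgebra.left_induction with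
  | algebraMap r => rw [reverse.commutes, changeForm_algebraMap, reverse.commutes]
  | add x y hx hy => rw [map_add, map_add, hx, hy, map_add, map_add]
  | ι_mul x a hx =>
    rw [reverse.map_mul, reverse_ι, changeForm_mul_ι h hB, hx, changeForm_ι_mul, map_sub,
      reverse.map_mul, reverse_ι, contractRight_eq, reverse_reverse]

end

section

variable {R M : Type*} [CommRing R] [AddCommGroup M] [Module R M] [Invertible (2 : R)]
  {Q : QuadraticForm R M}

theorem ι_injective : Function.Injective (ι Q) := fun a b hab =>
  (ExteriorAlgebra.ι_inj R a b).mp <| by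
    simpa only [changeForm_ι] using congrArg (changeForm changeForm.associated_neg_proof) hab

theorem algebraMap_injective : Function.Injective (algebraMap R (CliffordAlgebra Q)) :=
  fun a b hab => (ExteriorAlgebra.algebraMap_leftInverse M).injective <| by
    simpa only [changeForm_algebraMap] using
      congrArg (changeForm (Q := Q) changeForm.associated_neg_proof) hab

end

end CliffordAlgebra

namespace ExteriorAlgebra

section

variable {R M : Type*} [CommRing R] [AddCommGroup M] [Module R M] {n : ℕ}
  {z : ExteriorAlgebra R M}

theorem mul_ι_of_mem_exteriorPower (hz : z ∈ ⋀[R]^n M) (m : M) :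
    z * ι R m = (-1 : R) ^ n • (ι R m * z) := by
  induction hz using Submodule.pow_induction_on_left' with
  | algebraMap r => rw [pow_zero, one_smul, Algebra.commutes]
  | add x y i hx hy ihx ihy => rw [add_mul, ihx, ihy, mul_add, smul_add]
  | mem_mul a ha i x hx ihx =>
    obtain ⟨a, rfl⟩ := ha
    rw [mul_assoc, ihx, mul_smul_comm, ← mul_assoc,
      eq_neg_of_add_eq_zero_left (ι_add_mul_swap a m), neg_mul, mul_assoc, pow_succ, mul_smul,
      neg_one_smul, smul_neg]

theorem reverse_of_mem_exteriorPower (hz : z ∈ ⋀[R]^n M) :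
    reverse z = (-1 : R) ^ n.choose 2 • z := by
  induction hz using Submodule.pow_induction_on_left' with
  | algebraMap r => rw [reverse.commutes, Nat.choose_zero_succ, pow_zero, one_smul]
  | add x y i hx hy ihx ihy => rw [map_add, ihx, ihy, smul_add]
  | mem_mul a ha i x hx ihx =>
    obtain ⟨a, rfl⟩ := ha
    rw [reverse.map_mul, reverse_ι, ihx, smul_mul_assoc, mul_ι_of_mem_exteriorPower hx a,
      smul_smul, ← pow_add, Nat.choose_succ_succ, Nat.choose_one_right, add_comm]

theorem involute_of_mem_exteriorPower (hz : z ∈ ⋀[R]^n M) :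
    involute z = (-1 : R) ^ n • z := by
  induction hz using Submodule.pow_induction_on_left' with
  | algebraMap r => rw [AlgHom.commutes, pow_zero, one_smul]
  | add x y i hx hy ihx ihy => rw [map_add, ihx, ihy, smul_add]
  | mem_mul a ha i x hx ihx =>
    obtain ⟨a, rfl⟩ := ha
    rw [map_mul, involute_ι, ihx, pow_succ, mul_smul, neg_one_smul, mul_smul_comm, neg_mul,
      smul_neg]

end

section

variable {K E : Type*} [Field K] [AddCommGroup E] [Module K E] [FiniteDimensional K E]

theorem exteriorPower_eq_bot_of_finrank_lt {n : ℕ} (hn : Module.finrank K E < n) :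
    ⋀[K]^n E = ⊥ := by
  rw [← Submodule.finrank_eq_zero, exteriorPower.finrank_eq, Nat.choose_eq_zero_of_lt hn]

instance : Module.Finite K (ExteriorAlgebra K E) := by
  rw [Module.finite_def]
  suffices h : (⊤ : Submodule K (ExteriorAlgebra K E)) ≤
      ⨆ i ∈ Finset.range (Module.finrank K E + 1), ⋀[K]^i E by
    rw [← top_le_iff.mp h]
    exact Submodule.fg_biSup _ _ fun i _ => Module.Finite.iff_fg.mp inferInstance
  rw [← CliffordAlgebra.iSup_ι_range_eq_top (0 : QuadraticForm K E)]
  refine iSup_le fun i => ?_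
  by_cases hi : i < Module.finrank K E + 1
  · exact le_biSup (fun i => ⋀[K]^i E) (Finset.mem_range.mpr hi)
  · exact (exteriorPower_eq_bot_of_finrank_lt (by omega)).trans_le bot_le

variable [Invertible (2 : K)]

theorem eq_zero_of_mem_exteriorPower (hE : Module.finrank K E ≤ 4) {i : ℕ} (hi : i ≠ 1)
    {z : ExteriorAlgebra K E} (hz : z ∈ ⋀[K]^i E) (hinv : involute z = -z)
    (hrev : reverse z = z) : z = 0 := by
  by_cases hi5 : 5 ≤ i
  · rwa [exteriorPower_eq_bot_of_finrank_lt (by omega), Submodule.mem_bot] at hz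
  rw [involute_of_mem_exteriorPower hz] at hinv
  rw [reverse_of_mem_exteriorPower hz] at hrev
  rcases Nat.even_or_odd i with he | ho
  · rw [he.neg_one_pow, one_smul] at hinv
    exact eq_zero_of_eq_neg (K := K) hinv
  · obtain rfl : i = 3 := by obtain ⟨k, rfl⟩ := ho; omega
    rw [(show Odd (Nat.choose 3 2) by decide).neg_one_pow, neg_one_smul] at hrev
    exact eq_zero_of_eq_neg (K := K) hrev.symm

theorem mem_range_ι_of_involute_of_reverse (hE : Module.finrank K E ≤ 4)
    {y : ExteriorAlgebra K E} (hinv : involute y = -y) (hrev : reverse y = y) :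
    y ∈ LinearMap.range (ι K) := by
  classical
  let 𝒜 : ℕ → Submodule K (ExteriorAlgebra K E) := fun i => ⋀[K]^i E
  have hinv_maps (i : ℕ) :
      Set.MapsTo (involute (Q := (0 : QuadraticForm K E))).toLinearMap (𝒜 i) (𝒜 i) := fun z hz => by
    rw [AlgHom.toLinearMap_apply, involute_of_mem_exteriorPower hz]
    exact Submodule.smul_mem _ _ hz
  have hrev_maps (i : ℕ) :
      Set.MapsTo (reverse (Q := (0 : QuadraticForm K E))) (𝒜 i) (𝒜 i) := fun z hz => by
    rw [reverse_of_mem_exteriorPower hz]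
    exact Submodule.smul_mem _ _ hz
  rw [← DirectSum.sum_support_decompose 𝒜 y]
  refine Submodule.sum_mem _ fun i _ => ?_
  obtain rfl | hi := eq_or_ne i 1
  · exact (pow_one (LinearMap.range (ι K : E →ₗ[K] _))).le (DirectSum.decompose 𝒜 y 1).2
  have hyi : (DirectSum.decompose 𝒜 y i : ExteriorAlgebra K E) = 0 := by
    refine eq_zero_of_mem_exteriorPower hE hi (DirectSum.decompose 𝒜 y i).2 ?_ ?_
    · rw [← AlgHom.toLinearMap_apply, ← DirectSum.coe_decompose_map_of_mapsTo 𝒜 _ hinv_maps,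
        AlgHom.toLinearMap_apply, hinv, DirectSum.decompose_neg, DFinsupp.neg_apply,
        Submodule.coe_neg]
    · rw [← DirectSum.coe_decompose_map_of_mapsTo 𝒜 _ hrev_maps, hrev]
  rw [hyi]
  exact Submodule.zero_mem _

end

end ExteriorAlgebra

namespace CliffordAlgebra

section

variable {K E : Type*} [Field K] [Invertible (2 : K)] [AddCommGroup E] [Module K E]
  [FiniteDimensional K E] {Q : QuadraticForm K E}

instance : Module.Finite K (CliffordAlgebra Q) := Module.Finite.equiv (equivExterior Q).symm

instance : IsArtinianRing (CliffordAlgebra Q) := IsArtinianRing.of_finite K _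

theorem mem_range_ι_of_involute_of_reverse (hE : Module.finrank K E ≤ 4) {x : CliffordAlgebra Q}
    (hinv : involute x = -x) (hrev : reverse x = x) : x ∈ LinearMap.range (ι Q) := by
  let h := changeForm.associated_neg_proof (Q := Q)
  have hB := LinearMap.BilinForm.isSymm_iff.mpr (QuadraticForm.associated_isSymm K (-Q))
  obtain ⟨w, hw⟩ := ExteriorAlgebra.mem_range_ι_of_involute_of_reverse hE
    (y := changeForm h x) (by rw [← changeForm_involute, hinv, map_neg])
    (by rw [← changeForm_reverse h hB, hrev])
  refine ⟨w, (changeFormEquiv h).injective ?_⟩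
  rw [changeFormEquiv_apply, changeForm_ι]
  exact hw

theorem conj_ι_mem_range_ι (hE : Module.finrank K E ≤ 4) {u : CliffordAlgebra Q}
    (hu : u ∈ even Q) (v : E) : u * ι Q v * reverse u ∈ LinearMap.range (ι Q) := by
  apply mem_range_ι_of_involute_of_reverse hE
  · rw [map_mul, map_mul, involute_ι, ← reverse_involute, involute_eq_of_mem_even hu, mul_neg,
      neg_mul]
  · rw [reverse.map_mul, reverse.map_mul, reverse_reverse, reverse_ι, mul_assoc]

end

end CliffordAlgebra

/-- Porteous-type characterization: conjugation by an even unit-norm element is a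
Lorentz transformation on 1-vectors. -/
theorem spin_group_acts_as_lorentz (u : STA) (hu : u ∈ CliffordAlgebra.even Q13)
    (huu : u * reverse (Q := Q13) u = 1) :
    reverse (Q := Q13) u * u = 1 ∧
    ∃ f : (Fin 4 → ℝ) →ₗ[ℝ] (Fin 4 → ℝ),
      (∀ v : Fin 4 → ℝ, Q13 (f v) = Q13 v) ∧
      ∀ v : Fin 4 → ℝ, u * ι Q13 v * reverse (Q := Q13) u = ι Q13 (f v) := by
  have hdim : Module.finrank ℝ (Fin 4 → ℝ) ≤ 4 := by simp
  have hunit : reverse u * u = 1 := mul_eq_one_comm.mp huu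
  obtain ⟨g, hg⟩ :=
    (ι Q13).exists_leftInverse_of_injective (LinearMap.ker_eq_bot.mpr ι_injective)
  have hconj : ∀ v, ι Q13 (g (u * ι Q13 v * reverse u)) = u * ι Q13 v * reverse u := by
    intro v
    obtain ⟨w, hw⟩ := conj_ι_mem_range_ι hdim hu v
    rw [← hw, ← LinearMap.comp_apply g, hg, LinearMap.id_apply]
  refine ⟨hunit, g ∘ₗ LinearMap.mulLeftRight ℝ (u, reverse u) ∘ₗ ι Q13, fun v => ?_,
    fun v => (hconj v).symm⟩
  apply algebraMap_injective (Q := Q13)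
  rw [LinearMap.comp_apply, LinearMap.comp_apply, LinearMap.mulLeftRight_apply, ← ι_sq_scalar,
    hconj, conj_ι_mul_self huu hunit]
end

section
/- (The kernel of the adjoint representation of the spin group of Minkowski space is ℤ₂.) Let u be an element of the even subalgebra Cℓ⁰(1,3) with u * reverse(u) = 1. If u commutes with every 1-vector, i.e., u * ι(v) = ι(v) * u for all v ∈ ℝ⁴ (equivalently, u * ι(v) * reverse(u) = ι(v) for all v), then u = 1 or u = −1. -/
/-!
The map `x ↦ Q(m) x + m x m` multiplies by `2 Q(m)` every `x` commuting with `m`. On a product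
`γ_{i₁} ⋯ γ_{iₖ}` of distinct vectors of an orthogonal basis, conjugation by `γᵢ` is the sign
`(-1)^(k + [i ∈ {i₁,…,iₖ}])`; in even dimension and for `k > 0` some `i` makes it `-1`, and the
map for that `γᵢ` kills the product. These products span the algebra, so composing the maps
over the basis lands in the scalars, while it rescales an element commuting with all vectors by
the unit `∏ 2 Q(γᵢ)`. Such an element is thus a scalar `r`, and `r * r = 1`.
-/

open CliffordAlgebra

theorem List.Nodup.exists_odd_length_add_count {κ : Type*} [Fintype κ] [DecidableEq κ]
    (hcard : Even (Fintype.card κ)) {L : List κ} (hL : L.Nodup) (hne : L ≠ []) :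
    ∃ i, Odd (L.length + L.count i) := by
  rcases Nat.even_or_odd L.length with heven | hodd
  · obtain ⟨i, hi⟩ := List.exists_mem_of_ne_nil L hne
    exact ⟨i, by rw [List.count_eq_one_of_mem hL hi]; exact heven.add_one⟩
  · obtain ⟨i, hi⟩ : ∃ i, i ∉ L := by
      by_contra! hall
      have hlen : L.length = Fintype.card κ := by
        rw [← List.toFinset_card_of_nodup hL,
          Finset.eq_univ_of_forall fun i => List.mem_toFinset.2 (hall i), Finset.card_univ]
      exact Nat.not_even_iff_odd.2 hodd (hlen ▸ hcard)
    exact ⟨i, by rw [List.count_eq_zero_of_not_mem hi, add_zero]; exact hodd⟩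

theorem QuadraticMap.weightedSumSquares_isOrtho_basisFun {R κ : Type*} [CommRing R] [Fintype κ]
    [DecidableEq κ] (w : κ → R) :
    Pairwise fun i j =>
      (weightedSumSquares R w).IsOrtho (Pi.basisFun R κ i) (Pi.basisFun R κ j) := by
  intro i j h
  rw [isOrtho_def]
  simp [weightedSumSquares_apply, Pi.single_apply, mul_add, Finset.sum_add_distrib, h, h.symm]

namespace CliffordAlgebra

variable {R M κ : Type*} [CommRing R] [AddCommGroup M] [Module R M] {Q : QuadraticForm R M}

section ιProd

variable (Q) (v : κ → M)

noncomputable def ιProd (L : List κ) : CliffordAlgebra Q := (L.map fun i => ι Q (v i)).prod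

@[simp] theorem ιProd_nil : ιProd Q v [] = 1 := rfl

@[simp] theorem ιProd_cons (i : κ) (L : List κ) :
    ιProd Q v (i :: L) = ι Q (v i) * ιProd Q v L :=
  List.prod_cons

theorem ιProd_append (L₁ L₂ : List κ) :
    ιProd Q v (L₁ ++ L₂) = ιProd Q v L₁ * ιProd Q v L₂ := by
  rw [ιProd, List.map_append, List.prod_append, ιProd, ιProd]

end ιProd

/-- `Q m • (x + m x m⁻¹)`, written without inverting `Q m`. -/
noncomputable def conjSum (m : M) : CliffordAlgebra Q →ₗ[R] CliffordAlgebra Q :=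
  Q m • LinearMap.id + LinearMap.mulLeft R (ι Q m) ∘ₗ LinearMap.mulRight R (ι Q m)

theorem conjSum_apply (m : M) (x : CliffordAlgebra Q) :
    conjSum m x = Q m • x + ι Q m * x * ι Q m := by
  simp [conjSum, mul_assoc]

theorem conjSum_of_commute {m : M} {x : CliffordAlgebra Q} (h : Commute x (ι Q m)) :
    conjSum m x = (2 * Q m) • x := by
  rw [conjSum_apply, ← h.eq, mul_assoc, ι_sq_scalar, ← Algebra.commutes, ← Algebra.smul_def,
    two_mul, add_smul]

theorem list_prod_conjSum_of_commute {v : κ → M} {x : CliffordAlgebra Q}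
    (hx : ∀ i, Commute x (ι Q (v i))) (I : List κ) :
    (I.map fun i => conjSum (Q := Q) (v i)).prod x = (I.map fun i => 2 * Q (v i)).prod • x := by
  induction I with
  | nil => simp
  | cons i I ih =>
    rw [List.map_cons, List.prod_cons, Module.End.mul_apply, ih, map_smul,
      conjSum_of_commute (hx i), smul_smul, List.map_cons, List.prod_cons, mul_comm]

section Orthogonal

variable [DecidableEq κ] {v : κ → M} (hv : Pairwise fun i j => Q.IsOrtho (v i) (v j))
include hv

theorem ιProd_mul_ι (i : κ) (L : List κ) :
    ιProd Q v L * ι Q (v i) = (-1 : R) ^ (L.length + L.count i) • (ι Q (v i) * ιProd Q v L) := by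
  induction L with
  | nil => simp
  | cons j L ih =>
    rw [ιProd_cons, mul_assoc, ih, mul_smul_comm, ← mul_assoc, ← mul_assoc, List.length_cons,
      List.count_cons]
    rcases eq_or_ne j i with rfl | hji
    · simp [pow_add]
    · rw [ι_mul_ι_comm_of_isOrtho (hv hji), neg_mul, smul_neg, ← neg_smul]
      simp [hji, add_right_comm _ 1, pow_succ]

theorem ι_mul_ιProd_mul_ι (i : κ) (L : List κ) :
    ι Q (v i) * ιProd Q v L * ι Q (v i) =
      ((-1 : R) ^ (L.length + L.count i) * Q (v i)) • ιProd Q v L := by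
  rw [mul_assoc, ιProd_mul_ι hv, mul_smul_comm, ← mul_assoc, ι_sq_scalar, ← Algebra.smul_def,
    smul_smul]

theorem ι_mul_ιProd_mem_span (i : κ) {L : List κ} (hL : L.Nodup) :
    ι Q (v i) * ιProd Q v L ∈ Submodule.span R (ιProd Q v '' {L | L.Nodup}) := by
  by_cases hi : i ∈ L
  · obtain ⟨A, B, rfl⟩ := List.append_of_mem hi
    have hAB : (A ++ B).Nodup := hL.sublist (by simp)
    have hcancel : ι Q (v i) * ιProd Q v (A ++ i :: B) =
        ((-1 : R) ^ (A.length + A.count i) * Q (v i)) • ιProd Q v (A ++ B) := by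
      rw [ιProd_append, ιProd_cons, ← mul_assoc, ← mul_assoc, ι_mul_ιProd_mul_ι hv,
        smul_mul_assoc, ← ιProd_append]
    rw [hcancel]
    exact Submodule.smul_mem _ _ (Submodule.subset_span ⟨A ++ B, hAB, rfl⟩)
  · exact Submodule.subset_span ⟨i :: L, List.nodup_cons.2 ⟨hi, hL⟩, rfl⟩

theorem conjSum_ιProd (i : κ) (L : List κ) :
    conjSum (v i) (ιProd Q v L) =
      (Q (v i) * (1 + (-1 : R) ^ (L.length + L.count i))) • ιProd Q v L := by
  rw [conjSum_apply, ι_mul_ιProd_mul_ι hv, ← add_smul]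
  congr 1
  ring

theorem list_prod_conjSum_ιProd (I L : List κ) :
    (I.map fun i => conjSum (Q := Q) (v i)).prod (ιProd Q v L) =
      (I.map fun i => Q (v i) * (1 + (-1 : R) ^ (L.length + L.count i))).prod • ιProd Q v L := by
  induction I with
  | nil => simp
  | cons i I ih =>
    rw [List.map_cons, List.prod_cons, Module.End.mul_apply, ih, map_smul, conjSum_ιProd hv,
      smul_smul, List.map_cons, List.prod_cons, mul_comm]

end Orthogonal

theorem span_ιProd_nodup_eq_top [Fintype κ] (b : Module.Basis κ R M)
    (hb : Pairwise fun i j => Q.IsOrtho (b i) (b j)) :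
    Submodule.span R (ιProd Q b '' {L | L.Nodup}) = ⊤ := by
  classical
  refine Submodule.eq_top_iff'.2 fun x => ?_
  induction x using left_induction with
  | algebraMap r =>
    rw [Algebra.algebraMap_eq_smul_one]
    exact Submodule.smul_mem _ _ (Submodule.subset_span ⟨[], List.nodup_nil, rfl⟩)
  | add x y hx hy => exact add_mem hx hy
  | ι_mul x m hx =>
    rw [← b.sum_repr m, map_sum, Finset.sum_mul]
    refine Submodule.sum_mem _ fun i _ => ?_
    rw [map_smul, smul_mul_assoc]
    refine Submodule.smul_mem _ _ ?_
    induction hx using Submodule.span_induction with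
    | mem y hy =>
      obtain ⟨L, hL, rfl⟩ := hy
      exact ι_mul_ιProd_mem_span hb i hL
    | zero => simp
    | add y z _ _ hy hz => rw [mul_add]; exact add_mem hy hz
    | smul a y _ hy => rw [mul_smul_comm]; exact Submodule.smul_mem _ _ hy

theorem exists_algebraMap_eq_of_forall_commute_ι [Fintype κ] (b : Module.Basis κ R M)
    (hb : Pairwise fun i j => Q.IsOrtho (b i) (b j)) (hcard : Even (Fintype.card κ))
    (hQ : IsUnit (∏ i, 2 * Q (b i))) {x : CliffordAlgebra Q} (hx : ∀ m, Commute x (ι Q m)) :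
    ∃ r, algebraMap R _ r = x := by
  classical
  set P := (Finset.univ.toList.map fun i => conjSum (Q := Q) (b i)).prod
  have hPx : P x = (∏ i, 2 * Q (b i)) • x := by
    rw [list_prod_conjSum_of_commute fun i => hx (b i), Finset.prod_map_toList]
  have hP : ∀ y, P y ∈ (1 : Submodule R (CliffordAlgebra Q)) := by
    intro y
    have hy : y ∈ Submodule.span R (ιProd Q b '' {L | L.Nodup}) := by
      rw [span_ιProd_nodup_eq_top b hb]; exact Submodule.mem_top
    induction hy using Submodule.span_induction with
    | mem y hy =>
      obtain ⟨L, hL, rfl⟩ := hy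
      rw [list_prod_conjSum_ιProd hb]
      rcases eq_or_ne L [] with rfl | hne
      · exact Submodule.smul_mem _ _ (Submodule.mem_one.2 ⟨1, map_one _⟩)
      obtain ⟨i, hi⟩ := hL.exists_odd_length_add_count hcard hne
      have hzero : (0 : R) ∈ Finset.univ.toList.map fun i =>
          Q (b i) * (1 + (-1 : R) ^ (L.length + L.count i)) :=
        List.mem_map.2 ⟨i, Finset.mem_toList.2 (Finset.mem_univ i), by
          rw [hi.neg_one_pow, add_neg_cancel, mul_zero]⟩
      rw [List.prod_eq_zero hzero, zero_smul]
      exact zero_mem _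
    | zero => rw [map_zero]; exact zero_mem _
    | add y z _ _ hy hz => rw [map_add]; exact add_mem hy hz
    | smul a y _ hy => rw [map_smul]; exact Submodule.smul_mem _ _ hy
  obtain ⟨r, hr⟩ := Submodule.mem_one.1 (hP x)
  refine ⟨↑hQ.unit⁻¹ * r, ?_⟩
  rw [map_mul, hr, hPx, ← Algebra.smul_def, smul_smul, IsUnit.val_inv_mul, one_smul]

end CliffordAlgebra

theorem isUnit_prod_two_mul_Q13_basisFun :
    IsUnit (∏ i, 2 * Q13 (Pi.basisFun ℝ (Fin 4) i)) := by
  simp [Fin.prod_univ_four, Q13, QuadraticMap.weightedSumSquares_apply, Pi.single_apply]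

theorem adjoint_kernel_general (u : STA)
    (huu : u * reverse (Q := Q13) u = 1)
    (hcomm : ∀ v : Fin 4 → ℝ, u * ι Q13 v = ι Q13 v * u) :
    u = 1 ∨ u = -1 := by
  obtain ⟨r, rfl⟩ := exists_algebraMap_eq_of_forall_commute_ι (Q := Q13) (Pi.basisFun ℝ (Fin 4))
    (QuadraticMap.weightedSumSquares_isOrtho_basisFun _) (by decide)
    isUnit_prod_two_mul_Q13_basisFun hcomm
  have hr : r * r = 1 := FaithfulSMul.algebraMap_injective ℝ STA <| by
    rw [map_mul, map_one, ← huu, reverse.commutes]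
  rcases mul_self_eq_one_iff.1 hr with rfl | rfl
  · exact Or.inl (map_one _)
  · exact Or.inr (by rw [map_neg, map_one])

/-- The kernel of the adjoint representation of the spin group is ℤ₂. -/
theorem adjoint_kernel (u : STA) (hu : u ∈ CliffordAlgebra.even Q13)
    (huu : u * reverse (Q := Q13) u = 1)
    (hcomm : ∀ v : Fin 4 → ℝ, u * ι Q13 v = ι Q13 v * u) :
    u = 1 ∨ u = -1 :=
  adjoint_kernel_general u huu hcomm
end

section
/- (The spacetime algebra is the 2×2 quaternionic matrix algebra.) The real Clifford algebra Cℓ(1,3) of the Minkowski quadratic form of signature (1,3) on ℝ⁴ is isomorphic as an ℝ-algebra to the algebra of 2×2 matrices over the quaternions: Cℓ(1,3) ≃ₐ[ℝ] Matrix (Fin 2) (Fin 2) ℍ. -/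
open Module Quaternion QuaternionAlgebra

namespace CliffordAlgebra

section FiniteDimensional

variable {K V : Type*} [Field K] [Invertible (2 : K)] [AddCommGroup V] [Module K V]
  [FiniteDimensional K V] (Q : QuadraticForm K V)

instance : FiniteDimensional K (CliffordAlgebra Q) :=
  .of_basis ((finBasis K V).ExteriorAlgebra.map (equivExterior Q).symm)

theorem finrank_eq_two_pow : finrank K (CliffordAlgebra Q) = 2 ^ finrank K V := by
  rw [(equivExterior Q).finrank_eq, finrank_eq_card_basis (finBasis K V).ExteriorAlgebra,
    Fintype.card_finset, Fintype.card_fin]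

end FiniteDimensional

section Anticommute

variable {I R A : Type*} [Fintype I] [CommRing R] [Ring A] [Algebra R A] {γ : I → A} {w : I → R}

open QuadraticMap in
theorem sum_smul_mul_self_of_anticommute (hsq : ∀ i, γ i * γ i = algebraMap R A (w i))
    (hanti : ∀ i j, i ≠ j → γ i * γ j + γ j * γ i = 0) (v : I → R) :
    (∑ i, v i • γ i) * (∑ i, v i • γ i) = algebraMap R A (weightedSumSquares R w v) := by
  classical
  have hpolar : ∀ p ∈ Finset.univ.sym2.filter (¬ ·.IsDiag),
      polarSym2 (sq (R := R)) (p.map fun i => v i • γ i) = 0 := by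
    intro p hp
    induction p with
    | h i j =>
      have hij : i ≠ j := by simpa using (Finset.mem_filter.1 hp).2
      simp only [Sym2.map_mk, polarSym2_sym2Mk, polar, sq_apply, add_mul, mul_add,
        smul_mul_smul_comm, mul_comm (v j) (v i)]
      linear_combination (norm := module) (v i * v j) • hanti i j hij
  have hsum := (sq (R := R) (A := A)).map_sum Finset.univ (fun i => v i • γ i)
  rw [sq_apply, Finset.sum_eq_zero hpolar, add_zero] at hsum
  rw [hsum, weightedSumSquares_apply, map_sum]
  refine Finset.sum_congr rfl fun i _ => ?_
  rw [sq_apply, smul_mul_smul_comm, hsq, Algebra.smul_def, ← map_mul, smul_eq_mul, mul_comm]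

variable (hsq : ∀ i, γ i * γ i = algebraMap R A (w i))
  (hanti : ∀ i j, i ≠ j → γ i * γ j + γ j * γ i = 0)

def liftOfAnticommute : CliffordAlgebra (QuadraticMap.weightedSumSquares R w) →ₐ[R] A :=
  lift _ ⟨Fintype.linearCombination R γ, fun v => by
    rw [Fintype.linearCombination_apply]; exact sum_smul_mul_self_of_anticommute hsq hanti v⟩

theorem liftOfAnticommute_ι_single [DecidableEq I] (i : I) :
    liftOfAnticommute hsq hanti (ι _ (Pi.single i 1)) = γ i := by
  rw [liftOfAnticommute, lift_ι_apply, Fintype.linearCombination_apply_single, one_smul]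

theorem liftOfAnticommute_surjective (hγ : Algebra.adjoin R (Set.range γ) = ⊤) :
    Function.Surjective (liftOfAnticommute hsq hanti) := by
  classical
  refine (AlgHom.range_eq_top _).1 (eq_top_iff.2 (hγ ▸ Algebra.adjoin_le ?_))
  rintro _ ⟨i, rfl⟩
  exact ⟨_, liftOfAnticommute_ι_single hsq hanti i⟩

end Anticommute

end CliffordAlgebra

namespace Matrix

theorem subalgebra_eq_top_of_scalar_mem_of_single_mem {R α n : Type*} [CommSemiring R]
    [Semiring α] [Algebra R α] [Fintype n] [DecidableEq n] (S : Subalgebra R (Matrix n n α))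
    (hscalar : ∀ a, scalar n a ∈ S) (hsingle : ∀ i j, single i j (1 : α) ∈ S) : S = ⊤ := by
  refine eq_top_iff.2 fun M _ => ?_
  rw [matrix_eq_sum_single M]
  refine Subalgebra.sum_mem _ fun i _ => Subalgebra.sum_mem _ fun j _ => ?_
  have : single i j (M i j) = scalar n (M i j) * single i j 1 := by
    rw [scalar_apply, ← smul_eq_diagonal_mul, smul_single, smul_eq_mul, mul_one]
  rw [this]
  exact S.mul_mem (hscalar _) (hsingle i j)

theorem single_mem_of_fin_two {R α : Type*} [CommRing R] [Invertible (2 : R)] [Ring α]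
    [Algebra R α] (S : Subalgebra R (Matrix (Fin 2) (Fin 2) α)) (hZ : !![1, 0; 0, -1] ∈ S)
    (hX : !![0, 1; 1, 0] ∈ S) (i j : Fin 2) : single i j (1 : α) ∈ S := by
  have h00 : single 0 0 (1 : α) = (⅟2 : R) • (1 + !![1, 0; 0, -1]) := by
    ext a b; fin_cases a <;> fin_cases b <;> simp [← add_smul, invOf_two_add_invOf_two]
  have h11 : single 1 1 (1 : α) = (1 - single 0 0 1 : Matrix (Fin 2) (Fin 2) α) := by
    ext a b; fin_cases a <;> fin_cases b <;> simp
  have h01 : single 0 1 (1 : α) = single 0 0 1 * !![0, 1; 1, 0] := by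
    ext a b; fin_cases a <;> fin_cases b <;> simp
  have h10 : single 1 0 (1 : α) = single 1 1 1 * !![0, 1; 1, 0] := by
    ext a b; fin_cases a <;> fin_cases b <;> simp
  have m00 : single 0 0 (1 : α) ∈ S := h00 ▸ S.smul_mem (S.add_mem S.one_mem hZ) _
  have m11 : single 1 1 (1 : α) ∈ S := by rw [h11]; exact S.sub_mem S.one_mem m00
  have m01 : single 0 1 (1 : α) ∈ S := by rw [h01]; exact S.mul_mem m00 hX
  have m10 : single 1 0 (1 : α) ∈ S := by rw [h10]; exact S.mul_mem m11 hX
  fin_cases i <;> fin_cases j <;> assumption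

end Matrix

theorem QuaternionAlgebra.scalar_mem_of_scalar_i_mem_of_scalar_j_mem {R n : Type*} [CommRing R]
    {c₁ c₂ c₃ : R} [Fintype n] [DecidableEq n] (S : Subalgebra R (Matrix n n ℍ[R,c₁,c₂,c₃]))
    (hi : Matrix.scalar n (Basis.self R).i ∈ S) (hj : Matrix.scalar n (Basis.self R).j ∈ S)
    (q : ℍ[R,c₁,c₂,c₃]) : Matrix.scalar n q ∈ S := by
  let T := S.comap ((Matrix.diagonalAlgHom R).comp (Pi.constAlgHom R n ℍ[R,c₁,c₂,c₃]))
  have hi' : (Basis.self R).i ∈ T := hi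
  have hj' : (Basis.self R).j ∈ T := hj
  have hq : q = q.re • 1 + q.imI • (Basis.self R).i + q.imJ • (Basis.self R).j +
      q.imK • ((Basis.self R).i * (Basis.self R).j) := by
    ext <;> simp
  change q ∈ T
  rw [hq]
  exact T.add_mem (T.add_mem (T.add_mem (T.smul_mem T.one_mem _) (T.smul_mem hi' _))
    (T.smul_mem hj' _)) (T.smul_mem (T.mul_mem hi' hj') _)

/-- Typed as a basis of `ℍ[ℝ]` rather than `ℍ[ℝ,-1,0,-1]`, so that `simp` computes with its units
through the instances of `ℍ[ℝ]`. -/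
noncomputable def quaternionUnits : QuaternionAlgebra.Basis ℍ[ℝ] (-1 : ℝ) 0 (-1) :=
  .self ℝ

local notation "𝐢" => quaternionUnits.i
local notation "𝐣" => quaternionUnits.j
local notation "𝐤" => quaternionUnits.k

noncomputable def spacetimeGamma : Fin 4 → Matrix (Fin 2) (Fin 2) ℍ[ℝ] :=
  ![!![1, 0; 0, -1], !![0, 𝐢; 𝐢, 0], !![0, 𝐣; 𝐣, 0], !![0, 𝐤; 𝐤, 0]]

theorem spacetimeGamma_mul_self (i : Fin 4) :
    spacetimeGamma i * spacetimeGamma i = algebraMap ℝ _ (![1, -1, -1, -1] i) := by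
  rw [Algebra.algebraMap_eq_smul_one, Matrix.one_fin_two]
  fin_cases i <;> simp [spacetimeGamma]

theorem spacetimeGamma_anticomm (i j : Fin 4) (hij : i ≠ j) :
    spacetimeGamma i * spacetimeGamma j + spacetimeGamma j * spacetimeGamma i = 0 := by
  fin_cases i <;> fin_cases j <;> simp_all [spacetimeGamma, ← Matrix.ext_iff, Fin.forall_fin_two]

theorem spacetimeGamma_two_mul_three :
    spacetimeGamma 2 * spacetimeGamma 3 = Matrix.scalar (Fin 2) 𝐢 := by
  simp [spacetimeGamma, ← Matrix.ext_iff, Fin.forall_fin_two]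

theorem spacetimeGamma_three_mul_one :
    spacetimeGamma 3 * spacetimeGamma 1 = Matrix.scalar (Fin 2) 𝐣 := by
  simp [spacetimeGamma, ← Matrix.ext_iff, Fin.forall_fin_two]

theorem neg_spacetimeGamma_one_mul_two_mul_three :
    -(spacetimeGamma 1 * spacetimeGamma 2 * spacetimeGamma 3) = !![0, 1; 1, 0] := by
  simp [spacetimeGamma]

theorem adjoin_range_spacetimeGamma : Algebra.adjoin ℝ (Set.range spacetimeGamma) = ⊤ := by
  set S := Algebra.adjoin ℝ (Set.range spacetimeGamma)
  have hγ (i : Fin 4) : spacetimeGamma i ∈ S := Algebra.subset_adjoin ⟨i, rfl⟩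
  refine Matrix.subalgebra_eq_top_of_scalar_mem_of_single_mem S
    (scalar_mem_of_scalar_i_mem_of_scalar_j_mem S ?_ ?_) (Matrix.single_mem_of_fin_two S ?_ ?_)
  · exact spacetimeGamma_two_mul_three ▸ S.mul_mem (hγ 2) (hγ 3)
  · exact spacetimeGamma_three_mul_one ▸ S.mul_mem (hγ 3) (hγ 1)
  · exact hγ 0
  · exact neg_spacetimeGamma_one_mul_two_mul_three ▸
      S.neg_mem (S.mul_mem (S.mul_mem (hγ 1) (hγ 2)) (hγ 3))

/-- The spacetime algebra is the 2×2 quaternionic matrix algebra. -/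
theorem spacetime_algebra_iso_quaternion_matrices :
    Nonempty (CliffordAlgebra Q13 ≃ₐ[ℝ] Matrix (Fin 2) (Fin 2) (Quaternion ℝ)) := by
  let F : CliffordAlgebra Q13 →ₐ[ℝ] Matrix (Fin 2) (Fin 2) ℍ[ℝ] :=
    CliffordAlgebra.liftOfAnticommute spacetimeGamma_mul_self spacetimeGamma_anticomm
  have hsurj : Function.Surjective F :=
    CliffordAlgebra.liftOfAnticommute_surjective _ _ adjoin_range_spacetimeGamma
  have hdim : finrank ℝ (CliffordAlgebra Q13) = finrank ℝ (Matrix (Fin 2) (Fin 2) ℍ[ℝ]) := by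
    rw [CliffordAlgebra.finrank_eq_two_pow, finrank_matrix, Quaternion.finrank_eq_four]
    simp
  have hinj : Function.Injective F :=
    (LinearMap.injective_iff_surjective_of_finrank_eq_finrank hdim (f := F.toLinearMap)).2 hsurj
  exact ⟨AlgEquiv.ofBijective F ⟨hinj, hsurj⟩⟩
end
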